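/- arXiv:2508.03157 — 2 statements merged into one kernel-verified Lean document; each statement's English description precedes it below -/
import Mathlib

section
/- Let b = [[1,0,0,0],[0,1,1,0],[0,0,0,0],[0,0,0,1]] (4×4 over the field ℂ(ξ_α,ξ_β,ξ_γ) of rational functions) and I the 2×2 identity. Define R_{βα} = −(I⊗I − ξ_α b)⁻¹ (I⊗I − ξ_β b), and similarly R_{γα}, R_{γβ}. Then the Yang–Baxter equation holds as an identity of 8×8 matrices: (R_{γβ} ⊗ I)(I ⊗ R_{γα})(R_{βα} ⊗ I) = (I ⊗ R_{βα})(R_{γα} ⊗ I)(I ⊗ R_{γβ}). -/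
open Matrix

noncomputable section

/-- The field of rational functions in the three spectral parameters `ξ_α, ξ_β, ξ_γ`. -/
abbrev KK : Type := FractionRing (MvPolynomial (Fin 3) ℚ)

/-- The spectral parameters `ξ 0 = ξ_α`, `ξ 1 = ξ_β`, `ξ 2 = ξ_γ` as elements of `KK`. -/
def xi (i : Fin 3) : KK := algebraMap (MvPolynomial (Fin 3) ℚ) KK (MvPolynomial.X i)

/-- Reindexing of a 4×4 matrix by pairs, lexicographically: 0↦11, 1↦12, 2↦21, 3↦22. -/
def toPairs (M : Matrix (Fin 4) (Fin 4) KK) :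
    Matrix (Fin 2 × Fin 2) (Fin 2 × Fin 2) KK :=
  Matrix.reindex finProdFinEquiv.symm finProdFinEquiv.symm M

/-- The mTASEP two-particle interaction matrix
`b = [[1,0,0,0],[0,1,1,0],[0,0,0,0],[0,0,0,1]]`. -/
def bmat : Matrix (Fin 2 × Fin 2) (Fin 2 × Fin 2) KK :=
  toPairs !![1,0,0,0; 0,1,1,0; 0,0,0,0; 0,0,0,1]

/-- The scattering matrix `R_{βα} = −(I⊗I − ξ_α b)⁻¹ (I⊗I − ξ_β b)`
(here `1` is the 4×4 identity `I⊗I`). -/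
def R (β α : Fin 3) : Matrix (Fin 2 × Fin 2) (Fin 2 × Fin 2) KK :=
  -((1 - xi α • bmat)⁻¹ * (1 - xi β • bmat))

/-- `A ⊗ I` acting on the first two tensor factors of `(ℂ²)^{⊗3}`. -/
def legL (A : Matrix (Fin 2 × Fin 2) (Fin 2 × Fin 2) KK) :
    Matrix (Fin 2 × Fin 2 × Fin 2) (Fin 2 × Fin 2 × Fin 2) KK :=
  Matrix.of fun p q => A (p.1, p.2.1) (q.1, q.2.1) * (if p.2.2 = q.2.2 then 1 else 0)

/-- `I ⊗ A` acting on the last two tensor factors of `(ℂ²)^{⊗3}`. -/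
def legR (A : Matrix (Fin 2 × Fin 2) (Fin 2 × Fin 2) KK) :
    Matrix (Fin 2 × Fin 2 × Fin 2) (Fin 2 × Fin 2 × Fin 2) KK :=
  Matrix.of fun p q => (if p.1 = q.1 then 1 else 0) * A (p.2.1, p.2.2) (q.2.1, q.2.2)

/-! ### Auxiliary integer versions of the matrices, for kernel computation -/

def bZ : Matrix (Fin 2 × Fin 2) (Fin 2 × Fin 2) ℤ :=
  Matrix.reindex finProdFinEquiv.symm finProdFinEquiv.symm !![1,0,0,0; 0,1,1,0; 0,0,0,0; 0,0,0,1]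

def legLZ (A : Matrix (Fin 2 × Fin 2) (Fin 2 × Fin 2) ℤ) :
    Matrix (Fin 2 × Fin 2 × Fin 2) (Fin 2 × Fin 2 × Fin 2) ℤ :=
  Matrix.of fun p q => A (p.1, p.2.1) (q.1, q.2.1) * (if p.2.2 = q.2.2 then 1 else 0)

def legRZ (A : Matrix (Fin 2 × Fin 2) (Fin 2 × Fin 2) ℤ) :
    Matrix (Fin 2 × Fin 2 × Fin 2) (Fin 2 × Fin 2 × Fin 2) ℤ :=
  Matrix.of fun p q => (if p.1 = q.1 then 1 else 0) * A (p.2.1, p.2.2) (q.2.1, q.2.2)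

lemma hb2Z : bZ * bZ = bZ := by decide
lemma hXXZ : legLZ bZ * legLZ bZ = legLZ bZ := by decide
lemma hYYZ : legRZ bZ * legRZ bZ = legRZ bZ := by decide
lemma hbraidZ : legLZ bZ * legRZ bZ * legLZ bZ = legRZ bZ * legLZ bZ * legRZ bZ := by decide

/-- The canonical ring hom `ℤ →+* KK`. -/
def f : ℤ →+* KK := Int.castRingHom KK

lemma bmat_eq_map : bmat = bZ.map f := by
  ext ⟨i, j⟩ ⟨k, l⟩
  fin_cases i <;> fin_cases j <;> fin_cases k <;> fin_cases l <;>
    simp [bmat, bZ, toPairs, f, finProdFinEquiv, Matrix.vecHead, Matrix.vecTail]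

lemma legL_map (A : Matrix (Fin 2 × Fin 2) (Fin 2 × Fin 2) ℤ) :
    legL (A.map f) = (legLZ A).map f := by
  ext ⟨a, b, c⟩ ⟨d, e, g⟩
  by_cases h : c = g <;>
    simp [legL, legLZ, Matrix.map_apply, h]

lemma legR_map (A : Matrix (Fin 2 × Fin 2) (Fin 2 × Fin 2) ℤ) :
    legR (A.map f) = (legRZ A).map f := by
  ext ⟨a, b, c⟩ ⟨d, e, g⟩
  by_cases h : a = d <;>
    simp [legR, legRZ, Matrix.map_apply, h]

lemma hb2 : bmat * bmat = bmat := by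
  rw [bmat_eq_map, ← Matrix.map_mul, hb2Z]

lemma hXX : legL bmat * legL bmat = legL bmat := by
  rw [bmat_eq_map, legL_map, ← Matrix.map_mul, hXXZ]

lemma hYY : legR bmat * legR bmat = legR bmat := by
  rw [bmat_eq_map, legR_map, ← Matrix.map_mul, hYYZ]

lemma hbraid : legL bmat * legR bmat * legL bmat = legR bmat * legL bmat * legR bmat := by
  rw [bmat_eq_map, legL_map, legR_map]
  simp only [← Matrix.map_mul]
  rw [hbraidZ]


/-! ### Generic algebraic lemmas over an arbitrary field -/

section Generic

variable {K : Type} [Field K] {n : Type*} [Fintype n] [DecidableEq n]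

lemma inv_step (t : K) (ht : (1 : K) - t ≠ 0) (B : Matrix n n K) (hB : B * B = B) :
    (1 - t • B) * (1 + (t / (1 - t)) • B) = 1 := by
  have hc : t / (1 - t) - t - t * (t / (1 - t)) = 0 := by
    field_simp
    ring
  calc (1 - t • B) * (1 + (t / (1 - t)) • B)
      = 1 + (t / (1 - t) - t - t * (t / (1 - t))) • B := by
        simp only [mul_add, add_mul, sub_mul, mul_sub, mul_one, one_mul,
          smul_mul_assoc, mul_smul_comm, smul_smul, hB]
        module
    _ = 1 := by rw [hc]; simp

lemma prod_step (t s : K) (ht : (1 : K) - t ≠ 0) (B : Matrix n n K) (hB : B * B = B) :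
    -((1 + (t / (1 - t)) • B) * (1 - s • B)) = ((s - t) / (1 - t)) • B - 1 := by
  have hc2 : s - t / (1 - t) + t / (1 - t) * s = (s - t) / (1 - t) := by
    field_simp
    ring
  calc -((1 + (t / (1 - t)) • B) * (1 - s • B))
      = (s - t / (1 - t) + t / (1 - t) * s) • B - 1 := by
        simp only [mul_add, add_mul, sub_mul, mul_sub, mul_one, one_mul,
          smul_mul_assoc, mul_smul_comm, smul_smul, hB]
        module
    _ = ((s - t) / (1 - t)) • B - 1 := by rw [hc2]

/-- Abstract Yang–Baxter from idempotency, the braid relation and the scalar relation. -/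
lemma yb_general (c1 c2 c3 : K)
    (X Y : Matrix n n K) (hX : X * X = X) (hY : Y * Y = Y)
    (hbr : X * Y * X = Y * X * Y) (hc : c2 = c1 + c3 - c1 * c3) :
    (c1 • X - 1) * (c2 • Y - 1) * (c3 • X - 1) =
      (c3 • Y - 1) * (c2 • X - 1) * (c1 • Y - 1) := by
  subst hc
  simp only [mul_sub, sub_mul, mul_one, one_mul, smul_mul_assoc, mul_smul_comm,
    smul_smul, hX, hY]
  rw [show X * Y * X = Y * X * Y from hbr]
  module

end Generic

/-- `1 - ξ_i ≠ 0` in `KK`. -/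
lemma one_sub_xi_ne (i : Fin 3) : (1 : KK) - xi i ≠ 0 := by
  intro h
  have hinj : Function.Injective (algebraMap (MvPolynomial (Fin 3) ℚ) KK) :=
    IsFractionRing.injective _ _
  have h2 : algebraMap (MvPolynomial (Fin 3) ℚ) KK (1 - MvPolynomial.X i) =
      algebraMap (MvPolynomial (Fin 3) ℚ) KK 0 := by
    simpa [map_sub, xi] using h
  have h3 : (1 : MvPolynomial (Fin 3) ℚ) - MvPolynomial.X i = 0 := hinj h2
  have h4 := congrArg (MvPolynomial.coeff 0) h3
  simp [MvPolynomial.coeff_zero_X] at h4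

/-- Closed form of the scattering matrix. -/
lemma R_eq (β α : Fin 3) :
    R β α = ((xi β - xi α) / (1 - xi α)) • bmat - 1 := by
  have ht : (1 : KK) - xi α ≠ 0 := one_sub_xi_ne α
  have hinv : (1 - xi α • bmat)⁻¹ = 1 + (xi α / (1 - xi α)) • bmat :=
    inv_eq_right_inv (inv_step (xi α) ht bmat hb2)
  rw [R, hinv, prod_step (xi α) (xi β) ht bmat hb2]

lemma legL_comb (c : KK) (A : Matrix (Fin 2 × Fin 2) (Fin 2 × Fin 2) KK) :
    legL (c • A - 1) = c • legL A - 1 := by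
  ext ⟨a, b, d⟩ ⟨e, g, h⟩
  simp only [legL, Matrix.of_apply, Matrix.sub_apply, Matrix.smul_apply, Matrix.one_apply,
    smul_eq_mul, Prod.mk.injEq]
  by_cases h1 : d = h <;> by_cases h2 : a = e <;> by_cases h3 : b = g <;>
    simp [h1, h2, h3] <;> ring

lemma legR_comb (c : KK) (A : Matrix (Fin 2 × Fin 2) (Fin 2 × Fin 2) KK) :
    legR (c • A - 1) = c • legR A - 1 := by
  ext ⟨a, b, d⟩ ⟨e, g, h⟩
  simp only [legR, Matrix.of_apply, Matrix.sub_apply, Matrix.smul_apply, Matrix.one_apply,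
    smul_eq_mul, Prod.mk.injEq]
  by_cases h1 : a = e <;> by_cases h2 : b = g <;> by_cases h3 : d = h <;>
    simp [h1, h2, h3] <;> ring

/-- The Yang–Baxter equation for the mTASEP interaction matrix:
`(R_{γβ} ⊗ I)(I ⊗ R_{γα})(R_{βα} ⊗ I) = (I ⊗ R_{βα})(R_{γα} ⊗ I)(I ⊗ R_{γβ})`
with `α = 0`, `β = 1`, `γ = 2`. -/
theorem yang_baxter_mTASEP :
    legL (R 2 1) * legR (R 2 0) * legL (R 1 0) =
      legR (R 1 0) * legL (R 2 0) * legR (R 2 1) := by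
  have h0 := one_sub_xi_ne 0
  have h1 := one_sub_xi_ne 1
  rw [R_eq 2 1, R_eq 2 0, R_eq 1 0, legL_comb, legL_comb, legL_comb, legR_comb,
    legR_comb, legR_comb]
  apply yb_general _ _ _ _ _ hXX hYY hbraid
  field_simp
  ring

end
end

section
/- Let B be an N²×N² matrix over the rational function field in variables ξ_α, ξ_β, a, with a + b = 1 (b = 1−a). Let B' = a·(I_N ⊗ I_N) + b·B. Then the scattering matrix of B', namely −(I⊗I − ξ_α B')⁻¹(I⊗I − ξ_β B'), equals −((1−aξ_β)/(1−aξ_α)) · (I⊗I − (bξ_α/(1−aξ_α))·B)⁻¹ · (I⊗I − (bξ_β/(1−aξ_β))·B), provided 1−aξ_α and 1−aξ_β are nonzero and the relevant matrices are invertible. -/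
open Matrix

noncomputable section

/-- Mixing an interaction matrix `B` with the identity by a convex combination
`B' = a·I + b·B` (with `a + b = 1`) merely rescales and reparameterizes the scattering
matrix: `−(I − ξ_α B')⁻¹(I − ξ_β B')
  = −((1−aξ_β)/(1−aξ_α)) · (I − (bξ_α/(1−aξ_α))·B)⁻¹ · (I − (bξ_β/(1−aξ_β))·B)`,
provided `1 − aξ_α`, `1 − aξ_β` are nonzero and the relevant matrices are invertible. -/
theorem scattering_convex_combination (K : Type*) [Field K] (N : ℕ)
    (B : Matrix (Fin (N ^ 2)) (Fin (N ^ 2)) K) (ξα ξβ a b : K) (hab : a + b = 1)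
    (hα : 1 - a * ξα ≠ 0) (hβ : 1 - a * ξβ ≠ 0)
    (hinv : IsUnit (1 - (b * ξα / (1 - a * ξα)) • B))
    (hinv' : IsUnit (1 - ξα • (a • (1 : Matrix (Fin (N ^ 2)) (Fin (N ^ 2)) K) + b • B))) :
    -((1 - ξα • (a • (1 : Matrix (Fin (N ^ 2)) (Fin (N ^ 2)) K) + b • B))⁻¹ *
        (1 - ξβ • (a • (1 : Matrix (Fin (N ^ 2)) (Fin (N ^ 2)) K) + b • B))) =
      -(((1 - a * ξβ) / (1 - a * ξα)) •
        ((1 - (b * ξα / (1 - a * ξα)) • B)⁻¹ * (1 - (b * ξβ / (1 - a * ξβ)) • B))) := by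
  have key : ∀ ξ : K, 1 - a * ξ ≠ 0 →
      (1 - ξ • (a • (1 : Matrix (Fin (N ^ 2)) (Fin (N ^ 2)) K) + b • B))
        = (1 - a * ξ) • (1 - (b * ξ / (1 - a * ξ)) • B) := by
    intro ξ hξ
    have h1 : (1 - a * ξ) * (b * ξ / (1 - a * ξ)) = b * ξ := by
      field_simp
    rw [smul_sub, smul_smul, h1, smul_add, smul_smul, smul_smul, sub_smul, one_smul,
      mul_comm ξ a, mul_comm ξ b]
    abel
  rw [key ξα hα, key ξβ hβ]
  have hdet : IsUnit (1 - (b * ξα / (1 - a * ξα)) • B).det :=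
    (isUnit_iff_isUnit_det _).mp hinv
  have : Invertible (1 - a * ξα) := invertibleOfNonzero hα
  rw [Matrix.inv_smul (A := 1 - (b * ξα / (1 - a * ξα)) • B) (1 - a * ξα) hdet]
  rw [smul_mul_assoc, mul_smul_comm, smul_smul, invOf_eq_inv]
  congr 2
  rw [div_eq_mul_inv, mul_comm]

end
end
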